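/- arXiv:2110.08108 — 2 statements merged into one kernel-verified Lean document; each statement's English description precedes it below -/
import Mathlib

section
/- For every positive integer n, Σ_{π ⊢ n} mex(π) = Σ_{m≥0} p(n − m(m+1)/2), where p(j)=0 for j<0. -/
/-! Since `mex π = #{m | 1, …, m are all parts of π}`, the left side counts pairs `(π, m)` with
`{1, …, m} ⊆ π`. For fixed `m`, deleting the parts `1, …, m` is a bijection from these
partitions onto the partitions of `n - m(m+1)/2`. -/

open Finset

/-- The minimal excludant of a partition: the least positive integer not a part. -/
noncomputable def mex {n : ℕ} (π : Nat.Partition n) : ℕ :=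
  sInf {m : ℕ | 0 < m ∧ m ∉ π.parts}

/-- Number of partitions of `n` with minimal excludant `m`. -/
noncomputable def pmex (m n : ℕ) : ℕ :=
  ((Finset.univ : Finset (Nat.Partition n)).filter (fun π => mex π = m)).card

/-- The partition function, extended by `0` on negative integers. -/
noncomputable def pz (k : ℤ) : ℕ := if 0 ≤ k then Fintype.card (Nat.Partition k.toNat) else 0

/-- Number of partitions of `m` into distinct parts. -/
def qdist (m : ℕ) : ℕ := (Nat.Partition.distincts m).card

/-- A two-colored distinct-parts partition of `n`: a set of distinct (part, color)
pairs with positive parts summing to `n`. -/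
def IsTCD (n : ℕ) (s : Finset (ℕ × Fin 2)) : Prop :=
  (∀ p ∈ s, 0 < p.1) ∧ ∑ p ∈ s, p.1 = n

noncomputable def D2 (n : ℕ) : ℕ := Set.ncard {s : Finset (ℕ × Fin 2) | IsTCD n s}
noncomputable def D2e (n : ℕ) : ℕ :=
  Set.ncard {s : Finset (ℕ × Fin 2) | IsTCD n s ∧ Even s.card}
noncomputable def D2o (n : ℕ) : ℕ :=
  Set.ncard {s : Finset (ℕ × Fin 2) | IsTCD n s ∧ Odd s.card}

lemma sum_Icc_one_id (m : ℕ) : ∑ i ∈ Icc 1 m, i = m * (m + 1) / 2 := by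
  have h := sum_range_id (m + 1)
  rwa [range_eq_Ico, sum_eq_sum_Ico_succ_bot (Nat.succ_pos m), Nat.succ_eq_add_one,
    Ico_add_one_right_eq_Icc, zero_add, add_tsub_cancel_right, mul_comm] at h

namespace Nat.Partition

def addPartsEquiv (s : Multiset ℕ) (hs : ∀ i ∈ s, 0 < i) (k : ℕ) :
    Nat.Partition k ≃ {π : Nat.Partition (k + s.sum) // s ≤ π.parts} where
  toFun σ := ⟨⟨σ.parts + s, fun hi => (Multiset.mem_add.1 hi).elim σ.parts_pos (hs _),
    by rw [Multiset.sum_add, σ.parts_sum]⟩, Multiset.le_add_left _ _⟩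
  invFun π := ⟨π.1.parts - s, fun hi => π.1.parts_pos (Multiset.mem_of_le tsub_le_self hi), by
    have h := congrArg Multiset.sum (tsub_add_cancel_of_le π.2)
    rw [Multiset.sum_add, π.1.parts_sum] at h
    omega⟩
  left_inv σ := Nat.Partition.ext (add_tsub_cancel_right σ.parts s)
  right_inv π := Subtype.ext (Nat.Partition.ext (tsub_add_cancel_of_le π.2))

lemma sum_le_of_le_parts {n : ℕ} (π : Nat.Partition n) {s : Multiset ℕ} (h : s ≤ π.parts) :
    s.sum ≤ n := by
  obtain ⟨t, ht⟩ := Multiset.le_iff_exists_add.1 h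
  rw [← π.parts_sum, ht, Multiset.sum_add]
  exact Nat.le_add_right _ _

lemma card_filter_le_parts (n : ℕ) (s : Multiset ℕ) (hs : ∀ i ∈ s, 0 < i) :
    #{π : Nat.Partition n | s ≤ π.parts} = pz ((n : ℤ) - (s.sum : ℕ)) := by
  by_cases hsn : s.sum ≤ n
  · obtain ⟨k, rfl⟩ := Nat.exists_eq_add_of_le' hsn
    rw [pz, if_pos (by omega), show ((k + s.sum : ℕ) - s.sum : ℤ).toNat = k by omega,
      ← Fintype.card_subtype, Fintype.card_congr (addPartsEquiv s hs k)]
  · rw [pz, if_neg (by omega), Finset.card_eq_zero, filter_eq_empty_iff]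
    exact fun π _ h => hsn (π.sum_le_of_le_parts h)

lemma succ_notMem_parts {n : ℕ} (π : Nat.Partition n) : n + 1 ∉ π.parts := fun h => by
  simpa using π.sum_le_of_le_parts (Multiset.singleton_le.2 h)

lemma mex_le_of_notMem {n : ℕ} (π : Nat.Partition n) {i : ℕ} (hi : 0 < i) (h : i ∉ π.parts) :
    mex π ≤ i :=
  Nat.sInf_le (show i ∈ {k | 0 < k ∧ k ∉ π.parts} from ⟨hi, h⟩)

lemma mex_pos_and_notMem {n : ℕ} (π : Nat.Partition n) : 0 < mex π ∧ mex π ∉ π.parts :=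
  Nat.sInf_mem (s := {k | 0 < k ∧ k ∉ π.parts}) ⟨n + 1, n.succ_pos, π.succ_notMem_parts⟩

lemma mex_le {n : ℕ} (π : Nat.Partition n) : mex π ≤ n + 1 :=
  π.mex_le_of_notMem n.succ_pos π.succ_notMem_parts

lemma lt_mex_iff {n : ℕ} (π : Nat.Partition n) (m : ℕ) :
    m < mex π ↔ (Icc 1 m).val ≤ π.parts := by
  rw [Multiset.le_iff_subset (Icc 1 m).nodup]
  constructor
  · intro h i hi
    rw [Finset.mem_val, mem_Icc] at hi
    by_contra hi'
    exact (π.mex_le_of_notMem hi.1 hi').not_gt (by omega)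
  · intro h
    obtain ⟨hpos, hmex⟩ := π.mex_pos_and_notMem
    by_contra! hle
    exact hmex (h (mem_Icc.2 ⟨hpos, hle⟩))

lemma mex_eq_card_filter_lt {n : ℕ} (π : Nat.Partition n) :
    mex π = #{m ∈ range (n + 1) | m < mex π} := by
  rw [← Nat.Iio_eq_range, Iio_filter_lt, min_eq_right π.mex_le, Nat.card_Iio]

end Nat.Partition

theorem sigma_mex_formula_general (n : ℕ) :
    ∑ π : Nat.Partition n, mex π =
      ∑ m ∈ Finset.range (n + 1), pz ((n : ℤ) - (m * (m + 1) / 2 : ℕ)) := by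
  calc ∑ π : Nat.Partition n, mex π
      = ∑ π : Nat.Partition n, #((range (n + 1)).bipartiteAbove (fun π m => m < mex π) π) :=
        sum_congr rfl fun π _ => π.mex_eq_card_filter_lt
    _ = ∑ m ∈ range (n + 1), #(univ.bipartiteBelow (fun π m => m < mex π) m) :=
        sum_card_bipartiteAbove_eq_sum_card_bipartiteBelow _
    _ = _ := sum_congr rfl fun m _ => by
        rw [bipartiteBelow, filter_congr fun π _ => π.lt_mex_iff m,
          Nat.Partition.card_filter_le_parts _ _ fun i hi => (mem_Icc.1 hi).1, sum_val]
        simp only [id, sum_Icc_one_id]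

theorem sigma_mex_formula (n : ℕ) (hn : 0 < n) :
    ∑ π : Nat.Partition n, mex π =
      ∑ m ∈ Finset.range (n + 1), pz ((n : ℤ) - (m * (m + 1) / 2 : ℕ)) :=
  sigma_mex_formula_general n
end

section
/- Let t_m = m(m+1)/2. For every positive integer n, Σ_{π ⊢ n, mex(π) odd} mex(π) = Σ_{m≥0} (2m+1) (p(n − t_{2m}) − p(n − t_{2m+1})), with p(j)=0 for j<0. -/
open Finset

/-! A partition has mex greater than `m` exactly when `1, …, m` are among its parts, so deleting
these parts shows that there are `p(n - t_m)` such partitions of `n`. Hence `p(n - t_{2m}) -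
p(n - t_{2m+1})` counts the partitions with mex `2m + 1`, and the identity is the odd-mex sum
grouped by the value of the mex. -/

lemma sum_Icc_one_val (m : ℕ) : (Icc 1 m).val.sum = m * (m + 1) / 2 := by
  have h := sum_range_id (m + 1)
  rw [Nat.add_sub_cancel, mul_comm, range_eq_Ico, sum_eq_sum_Ico_succ_bot (Nat.succ_pos _)] at h
  rw [sum_val, ← Ico_add_one_right_eq_Icc, ← h, zero_add]
  rfl

section Mex

variable {n : ℕ} (π : Nat.Partition n)

lemma succ_mem_setOf_notMem_parts : n + 1 ∈ {k | 0 < k ∧ k ∉ π.parts} :=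
  ⟨n.succ_pos, fun h => (Nat.Partition.le_of_mem_parts h).not_gt n.lt_succ_self⟩

lemma mex_pos_and_notMem : 0 < mex π ∧ mex π ∉ π.parts :=
  Nat.sInf_mem ⟨_, succ_mem_setOf_notMem_parts π⟩

lemma mex_le : mex π ≤ n + 1 :=
  Nat.sInf_le (succ_mem_setOf_notMem_parts π)

lemma lt_mex_iff {m : ℕ} : m < mex π ↔ (Icc 1 m).val ≤ π.parts := by
  rw [Multiset.le_iff_subset (Icc 1 m).nodup]
  constructor
  · intro h i hi
    rw [mem_val, mem_Icc] at hi
    by_contra hmem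
    have : mex π ≤ i := Nat.sInf_le (s := {k | 0 < k ∧ k ∉ π.parts}) ⟨hi.1, hmem⟩
    omega
  · intro h
    by_contra! hle
    exact (mex_pos_and_notMem π).2 (h (by simpa using ⟨(mex_pos_and_notMem π).1, hle⟩))

lemma sum_parts_sub_Icc {m : ℕ} (h : m < mex π) :
    (π.parts - (Icc 1 m).val).sum + m * (m + 1) / 2 = n := by
  rw [← sum_Icc_one_val, ← Multiset.sum_add,
    tsub_add_cancel_of_le ((lt_mex_iff π).1 h), π.parts_sum]

end Mex

lemma card_filter_lt_mex_of_le {m n : ℕ} (hle : m * (m + 1) / 2 ≤ n) :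
    #{π : Nat.Partition n | m < mex π} = Fintype.card (Nat.Partition (n - m * (m + 1) / 2)) := by
  rw [← card_univ]
  refine card_bij' (fun π hπ => ⟨π.parts - (Icc 1 m).val,
      fun hi => π.parts_pos (Multiset.mem_of_le (Multiset.sub_le_self _ _) hi),
      by have := sum_parts_sub_Icc π (mem_filter.1 hπ).2; omega⟩)
    (fun σ _ => ⟨σ.parts + (Icc 1 m).val,
      fun hi => (Multiset.mem_add.1 hi).elim σ.parts_pos fun hi => (mem_Icc.1 (mem_val.mp hi)).1,
      by rw [Multiset.sum_add, σ.parts_sum, sum_Icc_one_val]; omega⟩)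
    (fun _ _ => mem_univ _) (fun σ _ => ?_) (fun π hπ => ?_) (fun σ _ => ?_)
  · simp [lt_mex_iff]
  · exact Nat.Partition.ext (tsub_add_cancel_of_le ((lt_mex_iff π).1 (mem_filter.1 hπ).2))
  · exact Nat.Partition.ext (add_tsub_cancel_right _ _)

lemma card_filter_lt_mex (m n : ℕ) :
    #{π : Nat.Partition n | m < mex π} = pz ((n : ℤ) - (m * (m + 1) / 2 : ℕ)) := by
  by_cases hle : m * (m + 1) / 2 ≤ n
  · rw [pz, if_pos (by omega), card_filter_lt_mex_of_le hle,
      show ((n : ℤ) - (m * (m + 1) / 2 : ℕ)).toNat = n - m * (m + 1) / 2 by omega]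
  · rw [pz, if_neg (by omega), card_eq_zero, filter_eq_empty_iff]
    intro π _ h
    have := sum_parts_sub_Icc π h
    omega

lemma card_filter_lt_mex_eq_pmex_add (m n : ℕ) :
    #{π : Nat.Partition n | m < mex π} =
      pmex (m + 1) n + #{π : Nat.Partition n | m + 1 < mex π} := by
  rw [pmex, ← card_filter_add_card_filter_not (fun π => mex π = m + 1), filter_filter,
    filter_filter]
  congr 2 <;> ext π <;> simp only [mem_filter, mem_univ, true_and] <;> omega

lemma sum_filter_odd_mex (n : ℕ) :
    ∑ π : Nat.Partition n with Odd (mex π), (mex π : ℤ) =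
      ∑ m ∈ range (n + 1), (2 * (m : ℤ) + 1) * pmex (2 * m + 1) n := by
  rw [← sum_fiberwise_of_maps_to (g := fun π => mex π / 2) (t := range (n + 1))
    (fun π _ => mem_range.2 (by have := mex_le π; omega))]
  refine sum_congr rfl fun m _ => ?_
  rw [filter_filter, pmex, ← nsmul_eq_mul', ← sum_const]
  refine sum_congr (filter_congr fun π _ => ?_) (fun π hπ => ?_)
  · rw [Nat.odd_iff]; omega
  · simp [(mem_filter.1 hπ).2]

theorem sigma_odd_mex_formula_general (n : ℕ) :
    ∑ π ∈ Finset.univ.filter (fun π : Nat.Partition n => Odd (mex π)), (mex π : ℤ) =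
      ∑ m ∈ Finset.range (n + 1), (2 * (m : ℤ) + 1) *
        (pz ((n : ℤ) - ((2 * m) * (2 * m + 1) / 2 : ℕ)) -
          pz ((n : ℤ) - ((2 * m + 1) * (2 * m + 2) / 2 : ℕ))) := by
  rw [sum_filter_odd_mex]
  refine sum_congr rfl fun m _ => ?_
  rw [← card_filter_lt_mex, show 2 * m + 2 = 2 * m + 1 + 1 by rfl, ← card_filter_lt_mex,
    card_filter_lt_mex_eq_pmex_add]
  push_cast
  ring

theorem sigma_odd_mex_formula (n : ℕ) (hn : 0 < n) :
    ∑ π ∈ Finset.univ.filter (fun π : Nat.Partition n => Odd (mex π)), (mex π : ℤ) =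
      ∑ m ∈ Finset.range (n + 1), (2 * (m : ℤ) + 1) *
        (pz ((n : ℤ) - ((2 * m) * (2 * m + 1) / 2 : ℕ)) -
          pz ((n : ℤ) - ((2 * m + 1) * (2 * m + 2) / 2 : ℕ))) :=
  sigma_odd_mex_formula_general n
end
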